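/- arXiv:2205.06236 — 3 statements merged into one kernel-verified Lean document; each statement's English description precedes it below -/
import Mathlib

section
/- Sortedness contract for Quicksort: for every list l : List ℤ, is_asorted (qsort l) holds. -/
/-- `is_asorted l` holds iff `l` is sorted in ascending order w.r.t. `≤`. -/
def is_asorted : List ℤ → Prop
  | [] => True
  | [_] => True
  | h₁ :: h₂ :: t => h₁ ≤ h₂ ∧ is_asorted (h₂ :: t)

/-- Quicksort on lists of integers. -/
def qsort : List ℤ → List ℤ
  | [] => []
  | h :: t =>
      qsort (t.filter (fun y => y ≤ h)) ++ h :: qsort (t.filter (fun y => h < y))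
termination_by l => l.length
decreasing_by
  · exact Nat.lt_succ_of_le (by simp only [List.length_unattach]; exact (List.length_filter_le _ _).trans (by simp))
  · exact Nat.lt_succ_of_le (by simp only [List.length_unattach]; exact (List.length_filter_le _ _).trans (by simp))

/-! Quicksort permutes its input, so everything in the left recursive call is at most the pivot
and everything in the right one exceeds it; with both recursive calls sorted, the concatenation
around the pivot is sorted. -/

theorem is_asorted_iff_isChain : ∀ l : List ℤ, is_asorted l ↔ l.IsChain (· ≤ ·)
  | [] | [_] => by simp [is_asorted]
  | _ :: b :: t => by
    rw [is_asorted, is_asorted_iff_isChain (b :: t), List.isChain_cons_cons]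

/-- `qsort.induct` with the hypotheses phrased through the filters of `qsort`'s defining equation
rather than through `attach`/`unattach`. -/
@[elab_as_elim]
theorem qsort_induction {motive : List ℤ → Prop} (nil : motive [])
    (cons : ∀ h t, motive (t.filter (· ≤ h)) → motive (t.filter (h < ·)) → motive (h :: t))
    (l : List ℤ) : motive l := by
  induction l using qsort.induct with
  | case1 => exact nil
  | case2 h t ih_le ih_gt =>
    rw [List.unattach_filter (g := (· ≤ h)) (hf := fun _ _ => rfl), List.unattach_attach] at ih_le
    rw [List.unattach_filter (g := (h < ·)) (hf := fun _ _ => rfl), List.unattach_attach] at ih_gt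
    exact cons h t ih_le ih_gt

theorem List.filter_le_append_filter_lt_perm {α : Type*} [LinearOrder α] (a : α) (l : List α) :
    (l.filter (· ≤ a) ++ l.filter (a < ·)).Perm l := by
  convert List.filter_append_perm (· ≤ a) l using 3
  funext x
  simp only [← decide_not, not_le]

theorem List.pairwise_le_append_cons {α : Type*} [Preorder α] {l r : List α} {a : α}
    (hl : l.Pairwise (· ≤ ·)) (hr : r.Pairwise (· ≤ ·))
    (hla : ∀ x ∈ l, x ≤ a) (har : ∀ y ∈ r, a ≤ y) : (l ++ a :: r).Pairwise (· ≤ ·) := by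
  refine List.pairwise_append.2 ⟨hl, List.pairwise_cons.2 ⟨har, hr⟩, fun x hx y hy => ?_⟩
  rcases List.mem_cons.1 hy with rfl | hy
  exacts [hla x hx, (hla x hx).trans (har y hy)]

theorem qsort_perm (l : List ℤ) : (qsort l).Perm l := by
  induction l using qsort_induction with
  | nil => simp [qsort]
  | cons h t ih_le ih_gt =>
    rw [qsort]
    exact ((ih_le.append (ih_gt.cons h)).trans List.perm_middle).trans
      ((List.filter_le_append_filter_lt_perm h t).cons h)

@[simp]
theorem mem_qsort {x : ℤ} {l : List ℤ} : x ∈ qsort l ↔ x ∈ l :=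
  (qsort_perm l).mem_iff

theorem pairwise_qsort (l : List ℤ) : (qsort l).Pairwise (· ≤ ·) := by
  induction l using qsort_induction with
  | nil => simp [qsort]
  | cons h t ih_le ih_gt =>
    rw [qsort]
    refine List.pairwise_le_append_cons ih_le ih_gt (fun x hx => ?_) (fun y hy => ?_)
    · simp only [mem_qsort, List.mem_filter, decide_eq_true_eq] at hx
      exact hx.2
    · simp only [mem_qsort, List.mem_filter, decide_eq_true_eq] at hy
      exact hy.2.le

theorem qsort_sorted_contract (l : List ℤ) : is_asorted (qsort l) :=
  (is_asorted_iff_isChain _).2 (List.isChain_iff_pairwise.2 (pairwise_qsort l))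
end

section
/- Content contract for binary search tree insertion: for all x, y : ℤ and every tree t : Tree with bstree t, tcount y (bstInsert x t) = tcount y t + (if y = x ∧ tcount x t = 0 then 1 else 0). -/
/-- Binary trees of integers: `node left key right`. -/
inductive ITree : Type
  | leaf : ITree
  | node : ITree → ℤ → ITree → ITree

/-- `treemin t` returns a flag telling whether `t` is nonempty, together with
the minimum element of `t` (and `0` for the empty tree). -/
def treemin : ITree → Bool × ℤ
  | .leaf => (false, 0)
  | .node l n r =>
      let ml := treemin l
      let mr := treemin r
      let m₁ := if ml.1 then min n ml.2 else n
      (true, if mr.1 then min m₁ mr.2 else m₁)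

/-- `treemax t` returns a flag telling whether `t` is nonempty, together with
the maximum element of `t` (and `0` for the empty tree). -/
def treemax : ITree → Bool × ℤ
  | .leaf => (false, 0)
  | .node l n r =>
      let ml := treemax l
      let mr := treemax r
      let m₁ := if ml.1 then max n ml.2 else n
      (true, if mr.1 then max m₁ mr.2 else m₁)

/-- The binary search tree property (no duplicate keys). -/
def bstree : ITree → Prop
  | .leaf => True
  | .node l n r =>
      bstree l ∧ bstree r ∧
      ((treemax l).1 = true → n > (treemax l).2) ∧
      ((treemin r).1 = true → n < (treemin r).2)

/-- Insertion into a binary search tree (no duplicate keys). -/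
def bstInsert (x : ℤ) : ITree → ITree
  | .leaf => .node .leaf x .leaf
  | .node l n r =>
      if x < n then .node (bstInsert x l) n r
      else if n < x then .node l n (bstInsert x r)
      else .node l n r

/-- `tcount x t` counts the occurrences of `x` in the tree `t`. -/
def tcount (x : ℤ) : ITree → ℕ
  | .leaf => 0
  | .node l n r => tcount x l + (if x = n then 1 else 0) + tcount x r


lemma count_min (k : ℤ) (t : ITree) (h : tcount k t ≠ 0) :
    (treemin t).1 = true ∧ (treemin t).2 ≤ k := by
  induction t with
  | leaf => simp [tcount] at h
  | node l n r ihl ihr =>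
    simp only [treemin]
    refine ⟨trivial, ?_⟩
    simp only [tcount] at h
    rcases Nat.eq_zero_or_pos (tcount k l) with hl | hl
    · rcases Nat.eq_zero_or_pos (tcount k r) with hr | hr
      · have hk : k = n := by by_contra hc; simp [hl, hr, hc] at h
        subst hk
        split <;> split <;> simp_all <;> omega
      · obtain ⟨h1, h2⟩ := ihr (by omega)
        simp [h1]; split <;> omega
    · obtain ⟨h1, h2⟩ := ihl (by omega)
      simp [h1]
      split <;> simp_all <;> omega

lemma count_max (k : ℤ) (t : ITree) (h : tcount k t ≠ 0) :
    (treemax t).1 = true ∧ k ≤ (treemax t).2 := by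
  induction t with
  | leaf => simp [tcount] at h
  | node l n r ihl ihr =>
    simp only [treemax]
    refine ⟨trivial, ?_⟩
    simp only [tcount] at h
    rcases Nat.eq_zero_or_pos (tcount k l) with hl | hl
    · rcases Nat.eq_zero_or_pos (tcount k r) with hr | hr
      · have hk : k = n := by by_contra hc; simp [hl, hr, hc] at h
        subst hk
        split <;> split <;> simp_all <;> omega
      · obtain ⟨h1, h2⟩ := ihr (by omega)
        simp [h1]; split <;> omega
    · obtain ⟨h1, h2⟩ := ihl (by omega)
      simp [h1]
      split <;> simp_all <;> omega

theorem bstInsert_count_contract (x y : ℤ) (t : ITree) (ht : bstree t) :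
    tcount y (bstInsert x t) =
      tcount y t + (if y = x ∧ tcount x t = 0 then 1 else 0) := by
  induction t with
  | leaf => simp [bstInsert, tcount]
  | node l n r ihl ihr =>
    obtain ⟨hbl, hbr, hml, hmr⟩ := ht
    rcases lt_trichotomy x n with hx | hx | hx
    · have hxr : tcount x r = 0 := by
        by_contra hc
        obtain ⟨h1, h2⟩ := count_min x r hc
        have := hmr h1; omega
      rw [bstInsert]
      simp only [hx, if_pos]
      simp only [tcount, ihl hbl, hxr]
      have hxn : ¬ (x = n) := by omega
      by_cases hy : y = x
      · subst hy
        simp [hxn]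
        omega
      · simp [hy]
    · subst hx
      rw [bstInsert]
      simp [tcount]
    · have hxl : tcount x l = 0 := by
        by_contra hc
        obtain ⟨h1, h2⟩ := count_max x l hc
        have := hml h1; omega
      rw [bstInsert]
      have hnx : ¬ (x < n) := by omega
      simp only [hnx, if_false, hx, if_pos]
      simp only [tcount, ihr hbr, hxl]
      have hxn : ¬ (x = n) := by omega
      by_cases hy : y = x
      · subst hy
        simp [hxn]
        split <;> omega
      · simp [hy]
end

section
/- Correctness of delmin on binary search trees: for every tree t : Tree with bstree t and t ≠ leaf, writing delmin t = (t', m, d), the following hold: d = true; m equals the minimum element of t (that is, tmem m t holds and m ≤ y for every y with tmem y t); bstree t' holds; m < y for every y with tmem y t'; and for every y : ℤ, tcount y t = tcount y t' + (if y = m then 1 else 0). -/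
/-- `tmem x t` holds iff `x` occurs in the tree `t`. -/
def tmem (x : ℤ) : ITree → Prop
  | .leaf => False
  | .node l n r => tmem x l ∨ x = n ∨ tmem x r

/-- `delmin t` deletes the leftmost (minimum) element of a binary search
tree, returning the resulting tree, the deleted element, and a flag telling
whether the tree was nonempty. -/
def delmin : ITree → ITree × ℤ × Bool
  | .leaf => (.leaf, 0, false)
  | .node .leaf a r => (r, a, true)
  | .node (.node l' b r') a r =>
      let (w, m, d) := delmin (.node l' b r')
      (.node w a r, m, d)

lemma tmem_max_le : ∀ (t : ITree) (y : ℤ), tmem y t → (treemax t).1 = true ∧ y ≤ (treemax t).2 := by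
  intro t
  induction t with
  | leaf => intro y h; exact absurd h (by simp [tmem])
  | node l n r ihl ihr =>
    intro y h
    simp only [treemax]
    refine ⟨by simp, ?_⟩
    rcases h with h | rfl | h
    · obtain ⟨h1, h2⟩ := ihl y h
      simp only [h1]
      split_ifs <;> simp <;> omega
    · split_ifs <;> simp <;> omega
    · obtain ⟨h1, h2⟩ := ihr y h
      simp only [h1]
      split_ifs <;> simp <;> omega

lemma tmem_min_le : ∀ (t : ITree) (y : ℤ), tmem y t → (treemin t).1 = true ∧ (treemin t).2 ≤ y := by
  intro t
  induction t with
  | leaf => intro y h; exact absurd h (by simp [tmem])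
  | node l n r ihl ihr =>
    intro y h
    simp only [treemin]
    refine ⟨by simp, ?_⟩
    rcases h with h | rfl | h
    · obtain ⟨h1, h2⟩ := ihl y h
      simp only [h1]
      split_ifs <;> simp <;> omega
    · split_ifs <;> simp <;> omega
    · obtain ⟨h1, h2⟩ := ihr y h
      simp only [h1]
      split_ifs <;> simp <;> omega

lemma max_mem : ∀ (t : ITree), (treemax t).1 = true → tmem (treemax t).2 t := by
  intro t
  induction t with
  | leaf => simp [treemax]
  | node l n r ihl ihr =>
    intro _
    simp only [treemax, tmem]
    split_ifs with h1 h2 h3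
    · rcases le_total (n ⊔ (treemax l).2) (treemax r).2 with h | h
      · rw [max_eq_right h]; exact Or.inr (Or.inr (ihr h1))
      · rw [max_eq_left h]
        rcases le_total n (treemax l).2 with h' | h'
        · rw [max_eq_right h']; exact Or.inl (ihl h2)
        · rw [max_eq_left h']; exact Or.inr (Or.inl rfl)
    · rcases le_total n (treemax r).2 with h | h
      · rw [max_eq_right h]; exact Or.inr (Or.inr (ihr h1))
      · rw [max_eq_left h]; exact Or.inr (Or.inl rfl)
    · rcases le_total n (treemax l).2 with h' | h'
      · rw [max_eq_right h']; exact Or.inl (ihl h3)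
      · rw [max_eq_left h']; exact Or.inr (Or.inl rfl)
    · exact Or.inr (Or.inl rfl)

lemma tcount_pos : ∀ (t : ITree) (y : ℤ), tmem y t ↔ 0 < tcount y t := by
  intro t y
  induction t with
  | leaf => simp [tmem, tcount]
  | node l n r ihl ihr =>
    simp only [tmem, tcount, ihl, ihr]
    split_ifs with h <;> simp [h] <;> omega

theorem delmin_correct (t : ITree) (ht : bstree t) (hne : t ≠ .leaf)
    (t' : ITree) (m : ℤ) (d : Bool) (hdel : delmin t = (t', m, d)) :
    d = true ∧
    (tmem m t ∧ ∀ y : ℤ, tmem y t → m ≤ y) ∧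
    bstree t' ∧
    (∀ y : ℤ, tmem y t' → m < y) ∧
    (∀ y : ℤ, tcount y t = tcount y t' + (if y = m then 1 else 0)) := by
  induction t generalizing t' m d with
  | leaf => exact absurd rfl hne
  | node l a r ihl ihr =>
    obtain ⟨hbl, hbr, hmaxl, hminr⟩ := ht
    cases l with
    | leaf =>
      simp only [delmin, Prod.mk.injEq] at hdel
      obtain ⟨rfl, rfl, rfl⟩ := hdel
      refine ⟨rfl, ⟨Or.inr (Or.inl rfl), ?_⟩, hbr, ?_, ?_⟩
      · intro y hy
        rcases hy with h | rfl | h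
        · exact absurd h (by simp [tmem])
        · exact le_refl _
        · obtain ⟨hf, hle⟩ := tmem_min_le r y h
          have := hminr hf
          omega
      · intro y hy
        obtain ⟨hf, hle⟩ := tmem_min_le r y hy
        have := hminr hf
        omega
      · intro y
        simp only [tcount]
        split_ifs <;> omega
    | node l1 b l2 =>
      rcases hres : delmin (ITree.node l1 b l2) with ⟨w, m0, d0⟩
      simp only [delmin, hres, Prod.mk.injEq] at hdel
      obtain ⟨rfl, rfl, rfl⟩ := hdel
      obtain ⟨hd0, ⟨hmem, hmin⟩, hbw, hlt, hcnt⟩ :=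
        ihl hbl (by simp) w m0 d0 hres
      have hflag : (treemax (ITree.node l1 b l2)).1 = true := by simp [treemax]
      have hma : a > (treemax (ITree.node l1 b l2)).2 := hmaxl hflag
      have hm0a : m0 < a := by
        obtain ⟨_, h2⟩ := tmem_max_le _ _ hmem
        omega
      refine ⟨hd0, ⟨Or.inl hmem, ?_⟩, ⟨hbw, hbr, ?_, hminr⟩, ?_, ?_⟩
      · intro y hy
        rcases hy with h | rfl | h
        · exact hmin y h
        · omega
        · obtain ⟨hf, hle⟩ := tmem_min_le r y h
          have := hminr hf
          omega
      · intro hf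
        have hw := max_mem w hf
        set z := (treemax w).2 with hz
        have h1 := hcnt z
        have h2 := (tcount_pos w z).mp hw
        have h3 : tmem z (ITree.node l1 b l2) := by
          rw [tcount_pos]
          split_ifs at h1 <;> omega
        obtain ⟨_, h4⟩ := tmem_max_le _ _ h3
        omega
      · intro y hy
        rcases hy with h | rfl | h
        · exact hlt y h
        · omega
        · obtain ⟨hf, hle⟩ := tmem_min_le r y h
          have := hminr hf
          omega
      · intro y
        have h := hcnt y
        simp only [tcount] at h ⊢
        split_ifs at h ⊢ <;> omega
end
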